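/- arXiv:2602.18800 — 5 statements merged into one kernel-verified Lean document; each statement's English description precedes it below -/
import Mathlib

section
/- Assume there exists at least one point y ∈ Ds with Safe(y). Then for every x ∈ Ds, if dist(x, t) < ∇ then Safe(x). (Lemma 3 / lmmC: every point of the scenario sub-domain strictly closer to the seed than the maximal safe distance is safe.) -/
/-- A point `x` of the scenario sub-domain `Ds` is safe (w.r.t. seed `t`) if the model
does not fail on `x` and does not fail on any point of `Ds` strictly closer to `t`. -/
def Safe {D : Type*} [MetricSpace D] (t : D) (Ds : Set D) (Fail : D → Prop) (x : D) : Prop :=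
  ¬ Fail x ∧ ∀ x' ∈ Ds, dist x' t < dist x t → ¬ Fail x'

theorem Safe.of_dist_lt {D : Type*} [MetricSpace D] {t : D} {Ds : Set D} {Fail : D → Prop}
    {x y : D} (hy : Safe t Ds Fail y) (hx : x ∈ Ds) (hxy : dist x t < dist y t) :
    Safe t Ds Fail x :=
  ⟨hy.2 x hx hxy, fun x' hx' hx'x => hy.2 x' hx' (hx'x.trans hxy)⟩

/-- Unlike `exists_lt_of_lt_csSup`, this needs neither nonemptiness nor boundedness:
the junk value `sSup s = 0` of those cases is excluded by `0 ≤ a`. -/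
theorem Real.exists_lt_of_nonneg_of_lt_sSup {s : Set ℝ} {a : ℝ} (ha : 0 ≤ a)
    (h : a < sSup s) : ∃ b ∈ s, a < b := by
  by_contra! hle
  exact (Real.sSup_le hle ha).not_gt h

theorem lmmC_general {D : Type*} [MetricSpace D] (t : D) (Ds : Set D) (Fail : D → Prop) :
    ∀ x ∈ Ds,
      dist x t < sSup {d : ℝ | ∃ y ∈ Ds, Safe t Ds Fail y ∧ dist y t = d} →
        Safe t Ds Fail x := by
  intro x hx hlt
  obtain ⟨_, ⟨y, -, hy, rfl⟩, hxy⟩ := Real.exists_lt_of_nonneg_of_lt_sSup dist_nonneg hlt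
  exact hy.of_dist_lt hx hxy

/-- Lemma 3 (lmmC): every point of the scenario sub-domain strictly closer to the seed
than the maximal safe distance is safe. -/
theorem lmmC {D : Type*} [MetricSpace D] (t : D) (Ds : Set D) (Fail : D → Prop)
    (hne : ∃ y ∈ Ds, Safe t Ds Fail y) :
    ∀ x ∈ Ds,
      dist x t < sSup {d : ℝ | ∃ y ∈ Ds, Safe t Ds Fail y ∧ dist y t = d} →
        Safe t Ds Fail x :=
  lmmC_general t Ds Fail
end

section
/- Let Mut ⊆ Mut' be two sets of mutants with Mut' ⊆ Ds. Assume there exists at least one point y ∈ Ds with Safe(y). Let α* ∈ Mut with ¬Fail(α*) and dist(α*, t) ≤ ∇, and let β* be a last success of Mut'. Then dist(α*, t) ≤ dist(β*, t). (Theorem 2, statement (2): if the last success of the smaller set lies within the maximal safe distance, expanding the mutant set can only move the last success farther from the seed.) -/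
def LastSuccess {D : Type*} [MetricSpace D] (t : D) (Fail : D → Prop)
    (S : Set D) (b : D) : Prop :=
  b ∈ S ∧ ¬ Fail b ∧ (∀ x ∈ S, dist x t < dist b t → ¬ Fail x) ∧
    ∀ τ ∈ S, (¬ Fail τ ∧ ∀ x ∈ S, dist x t < dist τ t → ¬ Fail x) → dist τ t ≤ dist b t

theorem not_fail_of_dist_lt_sSup_safe {D : Type*} [MetricSpace D] {t : D} {Ds : Set D}
    {Fail : D → Prop} (hne : ∃ y ∈ Ds, Safe t Ds Fail y) {x : D} (hx : x ∈ Ds)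
    (hlt : dist x t < sSup {d : ℝ | ∃ y ∈ Ds, Safe t Ds Fail y ∧ dist y t = d}) :
    ¬ Fail x := by
  obtain ⟨y, hy, hy_safe⟩ := hne
  obtain ⟨_, ⟨z, -, hz_safe, rfl⟩, hxz⟩ :=
    exists_lt_of_lt_csSup (s := {d : ℝ | ∃ y ∈ Ds, Safe t Ds Fail y ∧ dist y t = d})
      ⟨_, y, hy, hy_safe, rfl⟩ hlt
  exact hz_safe.2 x hx hxz

theorem LastSuccess.dist_le {D : Type*} [MetricSpace D] {t : D} {Fail : D → Prop}
    {S : Set D} {b τ : D} (hb : LastSuccess t Fail S b) (hτ : τ ∈ S) (hτ_nf : ¬ Fail τ)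
    (hτ_below : ∀ x ∈ S, dist x t < dist τ t → ¬ Fail x) :
    dist τ t ≤ dist b t :=
  hb.2.2.2 τ hτ ⟨hτ_nf, hτ_below⟩

/-- Theorem 2, statement (2): if the last success of the smaller set lies within the
maximal safe distance, expanding the mutant set can only move the last success farther
from the seed. -/
theorem expansion_last_success {D : Type*} [MetricSpace D] (t : D) (Ds : Set D)
    (Fail : D → Prop) (Mut Mut' : Set D)
    (hsub : Mut ⊆ Mut') (hvalid : Mut' ⊆ Ds)
    (hne : ∃ y ∈ Ds, Safe t Ds Fail y)
    (αs : D) (hαs_mem : αs ∈ Mut) (hαs_nf : ¬ Fail αs)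
    (hαs_le : dist αs t ≤ sSup {d : ℝ | ∃ y ∈ Ds, Safe t Ds Fail y ∧ dist y t = d})
    (βs : D) (hβs : LastSuccess t Fail Mut' βs) :
    dist αs t ≤ dist βs t :=
  hβs.dist_le (hsub hαs_mem) hαs_nf fun _ hx hlt =>
    not_fail_of_dist_lt_sSup_safe hne (hvalid hx) (hlt.trans_le hαs_le)
end

section
/- Let Mut ⊆ Mut' be two sets of mutants such that ¬Fail(x) for every x ∈ Mut. Let α° be a first failure of Mut' \ Mut, α* a last success of Mut' \ Mut, and β* a last success of Mut'. If dist(α*, t) = dist(α°, t), then dist(β*, t) ≤ dist(α*, t) and there is no x ∈ Mut' such that dist(β*, t) < dist(x, t) < dist(α*, t). (Theorem 3, statement (2).) -/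
/-!
Below `α*` no point of `Mut' \ Mut` fails, and no point of `Mut` fails at all, so no point of
`Mut'` closer to `t` than `α*` fails. Hence every point of `Mut'` closer than `α*` is a candidate
for the last success of `Mut'`, and so lies no farther than `β*`. Conversely `β*` cannot lie
beyond the failing point `α°`, which is at the same distance as `α*`.
-/

/-- A point `a` is a first failure of the set `S` (w.r.t. seed `t`) if `a ∈ S`, the model
fails on `a`, and it does not fail on any point of `S` strictly closer to `t`. -/
def FirstFailure {D : Type*} [MetricSpace D] (t : D) (Fail : D → Prop)
    (S : Set D) (a : D) : Prop :=
  a ∈ S ∧ Fail a ∧ ∀ x ∈ S, dist x t < dist a t → ¬ Fail x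

def NoFailBelow {D : Type*} [Dist D] (t : D) (Fail : D → Prop) (S : Set D) (r : ℝ) : Prop :=
  ∀ x ∈ S, dist x t < r → ¬ Fail x

namespace NoFailBelow

variable {D : Type*} [Dist D] {t : D} {Fail : D → Prop} {S T : Set D} {r : ℝ}

theorem mono_right {r' : ℝ} (h : NoFailBelow t Fail S r) (hr : r' ≤ r) :
    NoFailBelow t Fail S r' :=
  fun x hx hxr => h x hx (hxr.trans_le hr)

theorem of_diff (hT : ∀ x ∈ T, ¬ Fail x) (h : NoFailBelow t Fail (S \ T) r) :
    NoFailBelow t Fail S r := by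
  intro x hx hxr
  by_cases hxT : x ∈ T
  · exact hT x hxT
  · exact h x ⟨hx, hxT⟩ hxr

end NoFailBelow

namespace LastSuccess

variable {D : Type*} [MetricSpace D] {t : D} {Fail : D → Prop} {S : Set D} {b : D}

theorem noFailBelow (hb : LastSuccess t Fail S b) : NoFailBelow t Fail S (dist b t) :=
  hb.2.2.1

theorem dist_le_of_fail (hb : LastSuccess t Fail S b) {a : D} (ha : a ∈ S) (hfail : Fail a) :
    dist b t ≤ dist a t := by
  by_contra! hab
  exact hb.noFailBelow a ha hab hfail

theorem dist_le_of_noFailBelow (hb : LastSuccess t Fail S b) {r : ℝ}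
    (hr : NoFailBelow t Fail S r) {x : D} (hx : x ∈ S) (hxr : dist x t < r) :
    dist x t ≤ dist b t :=
  hb.2.2.2 x hx ⟨hr x hx hxr, hr.mono_right hxr.le⟩

end LastSuccess

theorem incremental_last_success_eq_general {D : Type*} [MetricSpace D] (t : D) (Fail : D → Prop)
    (Mut Mut' : Set D) (hnf : ∀ x ∈ Mut, ¬ Fail x)
    (αo : D) (hαo : FirstFailure t Fail (Mut' \ Mut) αo)
    (αs : D) (hαs : LastSuccess t Fail (Mut' \ Mut) αs)
    (βs : D) (hβs : LastSuccess t Fail Mut' βs)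
    (heq : dist αs t = dist αo t) :
    dist βs t ≤ dist αs t ∧
      ¬ ∃ x ∈ Mut', dist βs t < dist x t ∧ dist x t < dist αs t := by
  have hβα : dist βs t ≤ dist αs t := heq ▸ hβs.dist_le_of_fail hαo.1.1 hαo.2.1
  have hbelow : NoFailBelow t Fail Mut' (dist αs t) := hαs.noFailBelow.of_diff hnf
  refine ⟨hβα, ?_⟩
  rintro ⟨x, hx, hβx, hxα⟩
  exact (hβs.dist_le_of_noFailBelow hbelow hx hxα).not_gt hβx

/-- Theorem 3, statement (2). -/
theorem incremental_last_success_eq {D : Type*} [MetricSpace D] (t : D) (Fail : D → Prop)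
    (Mut Mut' : Set D) (hsub : Mut ⊆ Mut') (hnf : ∀ x ∈ Mut, ¬ Fail x)
    (αo : D) (hαo : FirstFailure t Fail (Mut' \ Mut) αo)
    (αs : D) (hαs : LastSuccess t Fail (Mut' \ Mut) αs)
    (βs : D) (hβs : LastSuccess t Fail Mut' βs)
    (heq : dist αs t = dist αo t) :
    dist βs t ≤ dist αs t ∧
      ¬ ∃ x ∈ Mut', dist βs t < dist x t ∧ dist x t < dist αs t :=
  incremental_last_success_eq_general t Fail Mut Mut' hnf αo hαo αs hαs βs hβs heq
end

section
/- Let Mut ⊆ D be a set of mutants that is valid (Mut ⊆ Ds) and complete with coverage size δ (every x ∈ Ds with dist(x, t) ≤ δ belongs to Mut), let FF be a first failure of Mut, and assume δ ≥ dist(FF, t). Then dist(FF, t) = Δ. (Theorem 4: under validity and sufficient coverage, the distance from the seed to the first failure mutant equals the minimal distance to failure in the scenario sub-domain.) -/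
/-! A first failure of a set of mutants is already a first failure of the whole sub-domain
as soon as the mutants cover every point of the sub-domain at most as far from the seed;
and the distance of a first failure of the sub-domain is the least failure distance there. -/

namespace FirstFailure

variable {D : Type*} [MetricSpace D] {t : D} {Fail : D → Prop} {S T : Set D} {a : D}

theorem of_subset_of_covers (h : FirstFailure t Fail S a) (hST : S ⊆ T)
    (hcover : ∀ x ∈ T, dist x t ≤ dist a t → x ∈ S) : FirstFailure t Fail T a :=
  ⟨hST h.1, h.2.1, fun x hx hlt => h.2.2 x (hcover x hx hlt.le) hlt⟩

theorem isLeast_dist (h : FirstFailure t Fail T a) :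
    IsLeast {d : ℝ | ∃ y ∈ T, Fail y ∧ dist y t = d} (dist a t) := by
  refine ⟨⟨a, h.1, h.2.1, rfl⟩, ?_⟩
  rintro _ ⟨y, hy, hfy, rfl⟩
  by_contra! hlt
  exact h.2.2 y hy hlt hfy

theorem dist_eq_sInf (h : FirstFailure t Fail T a) :
    dist a t = sInf {d : ℝ | ∃ y ∈ T, Fail y ∧ dist y t = d} :=
  h.isLeast_dist.csInf_eq.symm

end FirstFailure

/-- Theorem 4: under validity and sufficient coverage, the distance from the seed to the
first failure mutant equals the minimal distance to failure in the scenario sub-domain. -/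
theorem first_failure_eq_min_distance {D : Type*} [MetricSpace D] (t : D) (Ds : Set D)
    (Fail : D → Prop) (Mut : Set D) (δ : ℝ)
    (hvalid : Mut ⊆ Ds)
    (hcomplete : ∀ x ∈ Ds, dist x t ≤ δ → x ∈ Mut)
    (FF : D) (hFF : FirstFailure t Fail Mut FF)
    (hδ : δ ≥ dist FF t) :
    dist FF t = sInf {d : ℝ | ∃ y ∈ Ds, Fail y ∧ dist y t = d} :=
  (hFF.of_subset_of_covers hvalid fun x hx hle => hcomplete x hx (hle.trans hδ)).dist_eq_sInf
end

section
/- Let Mut ⊆ D be a set of mutants that is valid (Mut ⊆ Ds) and complete with coverage size δ (every x ∈ Ds with dist(x, t) ≤ δ belongs to Mut), let FF be a first failure of Mut and LS a last success of Mut paired with FF (so LS ∈ Mut, ¬Fail(LS), ¬Fail(x) for every x ∈ Mut with dist(x, t) < dist(LS, t), dist(LS, t) ≤ dist(FF, t), and no x ∈ Mut satisfies dist(LS, t) < dist(x, t) < dist(FF, t)), and assume δ ≥ dist(FF, t). Then dist(LS, t) ≤ ∇ and there is no x ∈ Ds such that dist(LS, t) < dist(x, t) < ∇. (Theorem 5: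 under validity and sufficient coverage, the distance to the last successful mutant is either exactly the maximal safe distance or the best conservative estimate of it.) -/
section

variable {D : Type*} [MetricSpace D] {t : D} {Ds : Set D} {Fail : D → Prop}

/-- The maximal safe distance `∇`. -/
noncomputable def maxSafeDist (t : D) (Ds : Set D) (Fail : D → Prop) : ℝ :=
  sSup {d : ℝ | ∃ y ∈ Ds, Safe t Ds Fail y ∧ dist y t = d}

theorem Safe.dist_le_of_fail {y a : D} (hy : Safe t Ds Fail y) (ha : a ∈ Ds) (hfail : Fail a) :
    dist y t ≤ dist a t :=
  not_lt.1 fun hlt => hy.2 a ha hlt hfail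

theorem safe_of_covered {S : Set D} {x : D} (hx : ¬ Fail x)
    (hcover : ∀ x' ∈ Ds, dist x' t < dist x t → x' ∈ S)
    (hS : ∀ x' ∈ S, dist x' t < dist x t → ¬ Fail x') : Safe t Ds Fail x :=
  ⟨hx, fun x' hx' hlt => hS x' (hcover x' hx' hlt) hlt⟩

theorem dist_le_maxSafeDist {x a : D} (hx : x ∈ Ds) (hsafe : Safe t Ds Fail x) (ha : a ∈ Ds)
    (hfail : Fail a) : dist x t ≤ maxSafeDist t Ds Fail := by
  refine le_csSup ⟨dist a t, ?_⟩ ⟨x, hx, hsafe, rfl⟩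
  rintro _ ⟨y, -, hy, rfl⟩
  exact hy.dist_le_of_fail ha hfail

theorem maxSafeDist_le_dist_of_fail {a : D} (ha : a ∈ Ds) (hfail : Fail a) :
    maxSafeDist t Ds Fail ≤ dist a t := by
  refine Real.sSup_le ?_ dist_nonneg
  rintro _ ⟨y, -, hy, rfl⟩
  exact hy.dist_le_of_fail ha hfail

end

/-- Theorem 5: under validity and sufficient coverage, the distance to the last
successful mutant is either exactly the maximal safe distance or the best conservative
estimate of it. -/
theorem last_success_estimates_max_safe_distance {D : Type*} [MetricSpace D] (t : D)
    (Ds : Set D) (Fail : D → Prop) (Mut : Set D) (δ : ℝ)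
    (hvalid : Mut ⊆ Ds)
    (hcomplete : ∀ x ∈ Ds, dist x t ≤ δ → x ∈ Mut)
    (FF : D) (hFF : FirstFailure t Fail Mut FF)
    (LS : D) (hLS_mem : LS ∈ Mut) (hLS_nf : ¬ Fail LS)
    (hLS_before : ∀ x ∈ Mut, dist x t < dist LS t → ¬ Fail x)
    (hLS_le : dist LS t ≤ dist FF t)
    (hpaired : ¬ ∃ x ∈ Mut, dist LS t < dist x t ∧ dist x t < dist FF t)
    (hδ : δ ≥ dist FF t) :
    dist LS t ≤ sSup {d : ℝ | ∃ y ∈ Ds, Safe t Ds Fail y ∧ dist y t = d} ∧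
      ¬ ∃ x ∈ Ds, dist LS t < dist x t ∧
        dist x t < sSup {d : ℝ | ∃ y ∈ Ds, Safe t Ds Fail y ∧ dist y t = d} := by
  obtain ⟨hFF_mem, hFF_fail, -⟩ := hFF
  have hLS_safe : Safe t Ds Fail LS :=
    safe_of_covered hLS_nf (fun x hx hlt => hcomplete x hx (by linarith)) hLS_before
  have hsup_le : maxSafeDist t Ds Fail ≤ dist FF t :=
    maxSafeDist_le_dist_of_fail (hvalid hFF_mem) hFF_fail
  refine ⟨dist_le_maxSafeDist (hvalid hLS_mem) hLS_safe (hvalid hFF_mem) hFF_fail, ?_⟩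
  rintro ⟨x, hx, hLS_lt, hx_lt⟩
  have hx_FF : dist x t < dist FF t := hx_lt.trans_le hsup_le
  exact hpaired ⟨x, hcomplete x hx (by linarith), hLS_lt, hx_FF⟩
end
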